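/- Let k ≥ 2 be an integer, let σ ∈ (0,1], let h ∈ (0,1], let I = [a, a+h], and let e : ℝ → ℝ be (k+2)-times continuously differentiable on a neighborhood of I. Let M ≥ 0 satisfy: (i) sup_{y ∈ I} |e^{(k+2)}(y)| ≤ M, and (ii) |e^{(s)}(a + h/2)| ≤ M h^{k+1+σ−s} for every integer s with 0 ≤ s ≤ k and k−s even. Define c_j = ((2j+1)/h) ∫_I e(x) L_{j,I}(x) dx. Then there is a constant C depending only on k such that |c_j| ≤ C M h^{k+1+σ} for every integer j with 0 ≤ j ≤ k and k−j even. -/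

import Mathlib

/-- The degree-`j` Legendre polynomial, given by the Rodrigues formula
`L_j(x) = (1/(2^j j!)) (d/dx)^j (x² − 1)^j`. -/
noncomputable def legendre (j : ℕ) : Polynomial ℝ :=
  Polynomial.C ((1 : ℝ) / (2 ^ j * j.factorial)) *
    Polynomial.derivative^[j] ((Polynomial.X ^ 2 - 1) ^ j)

open Polynomial Set MeasureTheory intervalIntegral

lemma eval_iter_neg (j i : ℕ) (x : ℝ) :
    (Polynomial.derivative^[i] ((X ^ 2 - 1 : Polynomial ℝ) ^ j)).eval (-x)
      = (-1 : ℝ) ^ i * (Polynomial.derivative^[i] ((X ^ 2 - 1 : Polynomial ℝ) ^ j)).eval x := by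
  induction i generalizing x with
  | zero => simp
  | succ i ih =>
    rw [Function.iterate_succ_apply']
    set p := Polynomial.derivative^[i] ((X ^ 2 - 1 : Polynomial ℝ) ^ j) with hp
    have h1 : (fun y : ℝ => p.eval (-y)) = fun y : ℝ => (-1 : ℝ) ^ i * p.eval y :=
      funext fun y => ih y
    have h2 : deriv (fun y : ℝ => p.eval (-y)) x = -(p.derivative.eval (-x)) := by
      rw [deriv_comp_neg (f := fun y : ℝ => p.eval y)]
      simp [Polynomial.deriv]
    have h3 : deriv (fun y : ℝ => (-1 : ℝ) ^ i * p.eval y) x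
        = (-1 : ℝ) ^ i * p.derivative.eval x := by
      rw [deriv_const_mul _ (p.differentiableAt)]
      simp [Polynomial.deriv]
    rw [h1] at h2
    rw [h2] at h3
    have := h3
    rw [pow_succ]
    linarith

lemma legendre_eval_neg (j : ℕ) (x : ℝ) :
    (legendre j).eval (-x) = (-1 : ℝ) ^ j * (legendre j).eval x := by
  unfold legendre
  rw [Polynomial.eval_mul, Polynomial.eval_mul, eval_iter_neg]
  simp only [Polynomial.eval_C]
  ring

lemma legendre_bound (k : ℕ) : ∃ B : ℝ, 1 ≤ B ∧
    ∀ j ≤ k, ∀ t ∈ Icc (-1 : ℝ) 1, |(legendre j).eval t| ≤ B := by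
  have H : ∀ j : ℕ, ∃ C : ℝ, ∀ t ∈ Icc (-1 : ℝ) 1, ‖(legendre j).eval t‖ ≤ C := fun j =>
    isCompact_Icc.exists_bound_of_continuousOn ((legendre j).continuous.continuousOn)
  choose g hg using H
  refine ⟨1 + ∑ i ∈ Finset.range (k + 1), |g i|, le_add_of_nonneg_right (by positivity), ?_⟩
  intro j hj t ht
  have h1 : g j ≤ ∑ i ∈ Finset.range (k + 1), |g i| :=
    le_trans (le_abs_self _)
      (Finset.single_le_sum (f := fun i => |g i|) (fun i _ => abs_nonneg _)
        (Finset.mem_range.mpr (Nat.lt_succ_of_le hj)))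
  calc |(legendre j).eval t| ≤ g j := hg j t ht
    _ ≤ 1 + ∑ i ∈ Finset.range (k + 1), |g i| := by linarith

lemma integral_reflect_zero {a h : ℝ} (g : ℝ → ℝ)
    (hg : ∀ x, g (2 * a + h - x) = -g x) :
    (∫ x in a..(a + h), g x) = 0 := by
  have h1 : (∫ x in a..(a + h), g (2 * a + h - x))
      = ∫ x in (2 * a + h - (a + h))..(2 * a + h - a), g x :=
    intervalIntegral.integral_comp_sub_left g (2 * a + h)
  have h2 : 2 * a + h - (a + h) = a := by ring
  have h3 : 2 * a + h - a = a + h := by ring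
  rw [h2, h3] at h1
  have h4 : (∫ x in a..(a + h), g (2 * a + h - x)) = ∫ x in a..(a + h), -g x := by
    simp_rw [hg]
  rw [h4, intervalIntegral.integral_neg] at h1
  linarith

lemma iterWithin {N n : ℕ} (hn : n ≤ N) {f : ℝ → ℝ} {U : Set ℝ} (hU : IsOpen U)
    (hf : ContDiffOn ℝ (N : ℕ∞) f U) {c d : ℝ} (hcd : c < d) (hsub : Icc c d ⊆ U)
    {x : ℝ} (hx : x ∈ Icc c d) :
    iteratedDerivWithin n f (Icc c d) x = iteratedDeriv n f x := by
  have hser : HasFTaylorSeriesUpToOn (N : ℕ∞) f (ftaylorSeriesWithin ℝ f U) U :=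
    hf.ftaylorSeriesWithin hU.uniqueDiffOn
  have h1 := (hser.mono hsub).eq_iteratedFDerivWithin_of_uniqueDiffOn
    (by exact_mod_cast hn) (uniqueDiffOn_Icc hcd) hx
  have h2 := hser.eq_iteratedFDerivWithin_of_uniqueDiffOn
    (by exact_mod_cast hn) hU.uniqueDiffOn (hsub hx)
  have h3 := iteratedFDerivWithin_of_isOpen (𝕜 := ℝ) (f := f) n hU (hsub hx)
  rw [iteratedDerivWithin_eq_iteratedFDerivWithin, iteratedDeriv_eq_iteratedFDeriv,
    ← h1, h2, h3]

lemma taylor_mid {k : ℕ} {h a : ℝ} (h0 : 0 < h) {e : ℝ → ℝ} {U : Set ℝ} (hU : IsOpen U)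
    (hsub : Icc a (a + h) ⊆ U) (he : ContDiffOn ℝ ((k + 2 : ℕ) : ℕ∞) e U) {M : ℝ}
    (hM : 0 ≤ M)
    (hbound : ∀ y ∈ Icc a (a + h), |iteratedDeriv (k + 2) e y| ≤ M) :
    ∀ x ∈ Icc a (a + h), |e x - ∑ s ∈ Finset.range (k + 2),
      ((s.factorial : ℝ))⁻¹ * (x - (a + h / 2)) ^ s * iteratedDeriv s e (a + h / 2)|
      ≤ M * h ^ (k + 2) := by
  intro x hx
  obtain ⟨hxa, hxb⟩ := hx
  set m := a + h / 2 with hm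
  clear_value m
  have hfac : (1 : ℝ) ≤ (k + 1).factorial := by exact_mod_cast (k + 1).factorial_pos
  rcases le_total m x with hmx | hmx
  · -- right half
    have hmb : m < a + h := by linarith
    have hIcc : Icc m (a + h) ⊆ Icc a (a + h) := Icc_subset_Icc (by linarith) le_rfl
    have hf : ContDiffOn ℝ ((k + 1 : ℕ) + 1) e (Icc m (a + h)) := by
      exact_mod_cast he.mono (hIcc.trans hsub)
    have hC : ∀ y ∈ Icc m (a + h),
        ‖iteratedDerivWithin ((k + 1) + 1) e (Icc m (a + h)) y‖ ≤ M := by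
      intro y hy
      rw [show (k + 1) + 1 = k + 2 from rfl,
        iterWithin (le_refl (k + 2)) hU he hmb (hIcc.trans hsub) hy]
      rw [Real.norm_eq_abs]
      exact hbound y (hIcc hy)
    have hx' : x ∈ Icc m (a + h) := ⟨hmx, hxb⟩
    have H := taylor_mean_remainder_bound (le_of_lt hmb) hf hx' hC
    have hT : taylorWithinEval e (k + 1) (Icc m (a + h)) m x
        = ∑ s ∈ Finset.range (k + 2),
          ((s.factorial : ℝ))⁻¹ * (x - m) ^ s * iteratedDeriv s e m := by
      rw [taylor_within_apply]
      refine Finset.sum_congr rfl fun s hs => ?_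
      rw [iterWithin (Nat.le_of_lt_succ (Finset.mem_range.mp hs) |>.trans (by omega))
        hU he hmb (hIcc.trans hsub) (left_mem_Icc.mpr (le_of_lt hmb))]
      rw [smul_eq_mul]
      try ring
    rw [hT, Real.norm_eq_abs] at H
    refine H.trans ?_
    have h1 : (x - m) ^ ((k + 1) + 1) ≤ h ^ ((k + 1) + 1) :=
      pow_le_pow_left₀ (by linarith) (by linarith) _
    have h2 : (0:ℝ) ≤ M * (x - m) ^ ((k + 1) + 1) :=
      mul_nonneg hM (pow_nonneg (by linarith) _)
    calc M * (x - m) ^ ((k + 1) + 1) / (k + 1).factorial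
        ≤ M * (x - m) ^ ((k + 1) + 1) := div_le_self h2 hfac
      _ ≤ M * h ^ (k + 2) := by
          rw [show (k + 1) + 1 = k + 2 from rfl] at h1 ⊢
          exact mul_le_mul_of_nonneg_left h1 hM
  · -- left half
    set b := m + h / 2 with hb
    clear_value b
    have hmb : m < b := by linarith
    set E : ℝ → ℝ := fun t => e (2 * m - t) with hE
    set V : Set ℝ := (fun t : ℝ => 2 * m - t) ⁻¹' U with hV
    have hVopen : IsOpen V := hU.preimage (continuous_const.sub continuous_id)
    have hrefl : ∀ t ∈ Icc m b, 2 * m - t ∈ Icc a (a + h) := by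
      intro t ht
      obtain ⟨ht1, ht2⟩ := ht
      exact ⟨by linarith, by linarith⟩
    have hsubV : Icc m b ⊆ V := fun t ht => hsub (hrefl t ht)
    have hEc : ContDiffOn ℝ ((k + 2 : ℕ) : ℕ∞) E V :=
      he.comp ((contDiff_const.sub contDiff_id).contDiffOn) (fun t ht => ht)
    have hEiter : ∀ (s : ℕ) (y : ℝ),
        iteratedDeriv s E y = (-1 : ℝ) ^ s * iteratedDeriv s e (2 * m - y) := by
      intro s y
      have h1 : E = fun t => (fun u => e (2 * m + u)) (-t) := by
        funext t; simp [hE, sub_eq_add_neg]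
      rw [h1, iteratedDeriv_comp_neg s (fun u => e (2 * m + u)) y,
        iteratedDeriv_comp_const_add s e (2 * m)]
      simp [smul_eq_mul, sub_eq_add_neg]
    have hf : ContDiffOn ℝ ((k + 1 : ℕ) + 1) E (Icc m b) := by
      exact_mod_cast hEc.mono hsubV
    have hC : ∀ y ∈ Icc m b, ‖iteratedDerivWithin ((k + 1) + 1) E (Icc m b) y‖ ≤ M := by
      intro y hy
      rw [show (k + 1) + 1 = k + 2 from rfl,
        iterWithin (le_refl (k + 2)) hVopen hEc hmb hsubV hy, Real.norm_eq_abs,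
        hEiter (k + 2) y, abs_mul, abs_pow, abs_neg, abs_one, one_pow, one_mul]
      exact hbound _ (hrefl y hy)
    have hx' : 2 * m - x ∈ Icc m b := ⟨by linarith, by linarith⟩
    have H := taylor_mean_remainder_bound (le_of_lt hmb) hf hx' hC
    have hEx : E (2 * m - x) = e x := by simp [hE]
    have hT : taylorWithinEval E (k + 1) (Icc m b) m (2 * m - x)
        = ∑ s ∈ Finset.range (k + 2),
          ((s.factorial : ℝ))⁻¹ * (x - m) ^ s * iteratedDeriv s e m := by
      rw [taylor_within_apply]
      refine Finset.sum_congr rfl fun s hs => ?_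
      rw [iterWithin (Nat.le_of_lt_succ (Finset.mem_range.mp hs) |>.trans (by omega))
        hVopen hEc hmb hsubV (left_mem_Icc.mpr (le_of_lt hmb)), hEiter s m]
      rw [show (2 * m - m) = m by ring, smul_eq_mul]
      have hpow : (2 * m - x - m) ^ s * (-1 : ℝ) ^ s = (x - m) ^ s := by
        rw [← mul_pow]; ring_nf
      linear_combination ((s.factorial : ℝ))⁻¹ * iteratedDeriv s e m * hpow
    rw [hEx, hT, Real.norm_eq_abs] at H
    refine H.trans ?_
    have h1 : (2 * m - x - m) ^ ((k + 1) + 1) ≤ h ^ ((k + 1) + 1) :=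
      pow_le_pow_left₀ (by linarith [hx'.1]) (by linarith) _
    have h2 : (0:ℝ) ≤ M * (2 * m - x - m) ^ ((k + 1) + 1) :=
      mul_nonneg hM (pow_nonneg (by linarith [hx'.1]) _)
    calc M * (2 * m - x - m) ^ ((k + 1) + 1) / (k + 1).factorial
        ≤ M * (2 * m - x - m) ^ ((k + 1) + 1) := div_le_self h2 hfac
      _ ≤ M * h ^ (k + 2) := by
          rw [show (k + 1) + 1 = k + 2 from rfl] at h1 ⊢
          exact mul_le_mul_of_nonneg_left h1 hM

/-- Let `k ≥ 2`.  There is `C = C(k)` such that: for `σ ∈ (0,1]`,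
`h ∈ (0,1]`, `I = [a, a+h]`, `e` of class `C^{k+2}` near `I`, and `M ≥ 0` with
(i) `sup_I |e^{(k+2)}| ≤ M` and (ii) `|e^{(s)}(a+h/2)| ≤ M h^{k+1+σ−s}` for `0 ≤ s ≤ k`
with `k−s` even, the scaled-Legendre coefficients `c_j = ((2j+1)/h) ∫_I e · L_{j,I}` satisfy
`|c_j| ≤ C M h^{k+1+σ}` for every `0 ≤ j ≤ k` with `k−j` even. -/
theorem stmt14 (k : ℕ) (hk : 2 ≤ k) :
    ∃ C : ℝ, 0 < C ∧
      ∀ σ : ℝ, 0 < σ → σ ≤ 1 →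
      ∀ h : ℝ, 0 < h → h ≤ 1 →
      ∀ (a : ℝ) (e : ℝ → ℝ) (U : Set ℝ), IsOpen U → Set.Icc a (a + h) ⊆ U →
        ContDiffOn ℝ ((k + 2 : ℕ) : ℕ∞) e U →
      ∀ M : ℝ, 0 ≤ M →
        (∀ y ∈ Set.Icc a (a + h), |iteratedDeriv (k + 2) e y| ≤ M) →
        (∀ s : ℕ, s ≤ k → Even (k - s) →
          |iteratedDeriv s e (a + h / 2)| ≤ M * h ^ ((k : ℝ) + 1 + σ - s)) →
      ∀ j : ℕ, j ≤ k → Even (k - j) →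
        |(2 * (j : ℝ) + 1) / h * ∫ y in a..(a + h),
            e y * (legendre j).eval (2 * (y - a) / h - 1)|
          ≤ C * M * h ^ ((k : ℝ) + 1 + σ) := by
  obtain ⟨B, hB1, hB⟩ := legendre_bound k
  have hB0 : (0 : ℝ) < B := lt_of_lt_of_le one_pos hB1
  refine ⟨(2 * (k : ℝ) + 1) * ((k : ℝ) + 3) * B, by positivity, ?_⟩
  intro σ hσ0 hσ1 h h0 h1 a e U hUopen hsubU he M hM hbound hmid j hjk hjev
  have hne : h ≠ 0 := ne_of_gt h0
  have haab : a ≤ a + h := by linarith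
  set L : ℝ → ℝ := fun y => (legendre j).eval (2 * (y - a) / h - 1) with hLdef
  have hLcont : Continuous L := by
    apply (legendre j).continuous.comp
    fun_prop
  have hLb : ∀ x ∈ Set.Icc a (a + h), |L x| ≤ B := by
    intro x hx
    apply hB j hjk
    have e1 : 0 ≤ 2 * (x - a) / h :=
      div_nonneg (mul_nonneg (by norm_num) (sub_nonneg.mpr hx.1)) h0.le
    have e2 : 2 * (x - a) / h ≤ 2 := by
      rw [div_le_iff₀ h0]; linarith [hx.2]
    exact ⟨by linarith, by linarith⟩
  -- the Taylor polynomial terms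
  set D : ℕ → ℝ := fun s => iteratedDeriv s e (a + h / 2) with hDdef
  set T : ℝ → ℝ := fun x => ∑ s ∈ Finset.range (k + 2),
    ((s.factorial : ℝ))⁻¹ * (x - (a + h / 2)) ^ s * D s with hTdef
  have hTA : ∀ x ∈ Set.Icc a (a + h), |e x - T x| ≤ M * h ^ (k + 2) :=
    taylor_mid h0 hUopen hsubU he hM hbound
  have hTcont : Continuous T := by
    apply continuous_finset_sum
    intro s _
    fun_prop
  have hecont : ContinuousOn e (Set.Icc a (a + h)) := (he.continuousOn).mono hsubU
  have huIoc : Set.uIoc a (a + h) = Set.Ioc a (a + h) := Set.uIoc_of_le haab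
  have huIcc : Set.uIcc a (a + h) = Set.Icc a (a + h) := Set.uIcc_of_le haab
  have intF : IntervalIntegrable (fun x => e x * L x) volume a (a + h) := by
    apply ContinuousOn.intervalIntegrable
    rw [huIcc]
    exact hecont.mul hLcont.continuousOn
  have intG : IntervalIntegrable (fun x => T x * L x) volume a (a + h) :=
    (hTcont.mul hLcont).intervalIntegrable a (a + h)
  have hpow1 : (0 : ℝ) ≤ h ^ ((k : ℝ) + 2 + σ) := Real.rpow_nonneg h0.le _
  have hpow2 : (0 : ℝ) ≤ h ^ ((k : ℝ) + 1 + σ) := Real.rpow_nonneg h0.le _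
  -- each summand integral bound
  have key : ∀ s ∈ Finset.range (k + 2),
      |∫ x in a..(a + h), ((s.factorial : ℝ))⁻¹ * (x - (a + h / 2)) ^ s * D s * L x|
        ≤ B * M * h ^ ((k : ℝ) + 2 + σ) := by
    intro s hs
    have hs2 : s < k + 2 := Finset.mem_range.mp hs
    by_cases hpar : s ≤ k ∧ Even (k - s)
    · obtain ⟨hsk, hp⟩ := hpar
      have hmid' := hmid s hsk hp
      have hb1 : ∀ x ∈ Set.uIoc a (a + h),
          ‖((s.factorial : ℝ))⁻¹ * (x - (a + h / 2)) ^ s * D s * L x‖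
            ≤ h ^ s * (M * h ^ ((k : ℝ) + 1 + σ - s)) * B := by
        intro x hx
        rw [huIoc] at hx
        have hxI : x ∈ Set.Icc a (a + h) := Set.Ioc_subset_Icc_self hx
        have e1 : |((s.factorial : ℝ))⁻¹| ≤ 1 := by
          rw [abs_of_nonneg (by positivity)]
          apply inv_le_one_of_one_le₀
          exact_mod_cast s.factorial_pos
        have e2 : |(x - (a + h / 2)) ^ s| ≤ h ^ s := by
          rw [abs_pow]
          apply pow_le_pow_left₀ (abs_nonneg _)
          rw [abs_le]
          constructor <;> [linarith [hxI.1]; linarith [hxI.2]]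
        have e3 : |D s| ≤ M * h ^ ((k : ℝ) + 1 + σ - s) := hmid'
        have e4 : |L x| ≤ B := hLb x hxI
        have hα : (0 : ℝ) ≤ M * h ^ ((k : ℝ) + 1 + σ - s) :=
          mul_nonneg hM (Real.rpow_nonneg h0.le _)
        rw [Real.norm_eq_abs, abs_mul, abs_mul, abs_mul]
        calc |((s.factorial : ℝ))⁻¹| * |(x - (a + h / 2)) ^ s| * |D s| * |L x|
            ≤ 1 * h ^ s * (M * h ^ ((k : ℝ) + 1 + σ - s)) * B := by
              apply mul_le_mul (mul_le_mul (mul_le_mul e1 e2 (abs_nonneg _) (by norm_num))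
                e3 (abs_nonneg _) (by positivity)) e4 (abs_nonneg _)
              positivity
          _ = h ^ s * (M * h ^ ((k : ℝ) + 1 + σ - s)) * B := by ring
      have H := intervalIntegral.norm_integral_le_of_norm_le_const hb1
      rw [Real.norm_eq_abs] at H
      have hhh : h ^ s * h ^ ((k : ℝ) + 1 + σ - s) * h = h ^ ((k : ℝ) + 2 + σ) := by
        rw [← Real.rpow_natCast h s, ← Real.rpow_add h0, ← Real.rpow_add_one hne]
        congr 1
        ring
      have hcomb : h ^ s * (M * h ^ ((k : ℝ) + 1 + σ - s)) * B * |a + h - a|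
          = B * M * h ^ ((k : ℝ) + 2 + σ) := by
        rw [show a + h - a = h by ring, abs_of_pos h0,
          show h ^ s * (M * h ^ ((k : ℝ) + 1 + σ - s)) * B * h
            = B * M * (h ^ s * h ^ ((k : ℝ) + 1 + σ - s) * h) by ring, hhh]
      rw [hcomb] at H
      exact H
    · -- vanishing by parity
      have hodd : (s + j) % 2 = 1 := by
        have hj2 : (k - j) % 2 = 0 := Nat.even_iff.mp hjev
        rcases Nat.lt_or_ge k s with hc | hc
        · omega
        · have hp : ¬Even (k - s) := fun hE => hpar ⟨hc, hE⟩
          have : (k - s) % 2 = 1 := Nat.not_even_iff.mp hp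
          omega
      have hneg : ((-1 : ℝ)) ^ s * ((-1 : ℝ)) ^ j = -1 := by
        rw [← pow_add]
        exact Odd.neg_one_pow (Nat.odd_iff.mpr hodd)
      have hzero : (∫ x in a..(a + h),
          ((s.factorial : ℝ))⁻¹ * (x - (a + h / 2)) ^ s * D s * L x) = 0 := by
        apply integral_reflect_zero
        intro x
        have hL : L (2 * a + h - x) = (-1 : ℝ) ^ j * L x := by
          have harg : 2 * ((2 * a + h - x) - a) / h - 1 = -(2 * (x - a) / h - 1) := by
            field_simp
            ring
          show (legendre j).eval _ = (-1 : ℝ) ^ j * (legendre j).eval _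
          rw [harg, legendre_eval_neg]
        have hP : (2 * a + h - x - (a + h / 2)) ^ s
            = (-1 : ℝ) ^ s * (x - (a + h / 2)) ^ s := by
          rw [show 2 * a + h - x - (a + h / 2) = -(x - (a + h / 2)) by ring, neg_pow]
        rw [hP, hL]
        linear_combination
          (((s.factorial : ℝ))⁻¹ * (x - (a + h / 2)) ^ s * D s * L x) * hneg
      rw [hzero, abs_zero]
      positivity
  -- sum decomposition of ∫ T L
  have intterm : ∀ s ∈ Finset.range (k + 2), IntervalIntegrable
      (fun x => ((s.factorial : ℝ))⁻¹ * (x - (a + h / 2)) ^ s * D s * L x)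
      volume a (a + h) := by
    intro s _
    apply Continuous.intervalIntegrable
    fun_prop
  have hsum : (∫ x in a..(a + h), T x * L x)
      = ∑ s ∈ Finset.range (k + 2),
        ∫ x in a..(a + h), ((s.factorial : ℝ))⁻¹ * (x - (a + h / 2)) ^ s * D s * L x := by
    rw [← intervalIntegral.integral_finset_sum intterm]
    congr 1
    funext x
    simp only [hTdef]
    rw [Finset.sum_mul]
  have hGbound : |∫ x in a..(a + h), T x * L x|
      ≤ ((k : ℝ) + 2) * (B * M * h ^ ((k : ℝ) + 2 + σ)) := by
    rw [hsum]
    calc |∑ s ∈ Finset.range (k + 2), ∫ x in a..(a + h),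
            ((s.factorial : ℝ))⁻¹ * (x - (a + h / 2)) ^ s * D s * L x|
        ≤ ∑ s ∈ Finset.range (k + 2), |∫ x in a..(a + h),
            ((s.factorial : ℝ))⁻¹ * (x - (a + h / 2)) ^ s * D s * L x| :=
          Finset.abs_sum_le_sum_abs _ _
      _ ≤ ∑ _s ∈ Finset.range (k + 2), B * M * h ^ ((k : ℝ) + 2 + σ) :=
          Finset.sum_le_sum key
      _ = ((k : ℝ) + 2) * (B * M * h ^ ((k : ℝ) + 2 + σ)) := by
          rw [Finset.sum_const, Finset.card_range, nsmul_eq_mul]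
          push_cast
          ring
  -- remainder bound
  have hRbound : |(∫ x in a..(a + h), e x * L x) - ∫ x in a..(a + h), T x * L x|
      ≤ B * M * h ^ ((k : ℝ) + 2 + σ) := by
    rw [← intervalIntegral.integral_sub intF intG]
    have hb1 : ∀ x ∈ Set.uIoc a (a + h), ‖e x * L x - T x * L x‖ ≤ M * h ^ (k + 2) * B := by
      intro x hx
      rw [huIoc] at hx
      have hxI : x ∈ Set.Icc a (a + h) := Set.Ioc_subset_Icc_self hx
      rw [show e x * L x - T x * L x = (e x - T x) * L x by ring, Real.norm_eq_abs, abs_mul]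
      apply mul_le_mul (hTA x hxI) (hLb x hxI) (abs_nonneg _) (by positivity)
    have H := intervalIntegral.norm_integral_le_of_norm_le_const hb1
    rw [Real.norm_eq_abs, show a + h - a = h by ring, abs_of_pos h0] at H
    refine H.trans ?_
    have hc : M * h ^ (k + 2) * B * h = B * M * h ^ ((k : ℝ) + 3) := by
      rw [show M * h ^ (k + 2) * B * h = B * M * (h ^ (k + 2) * h) by ring,
        ← Real.rpow_natCast h (k + 2), ← Real.rpow_add_one hne]
      congr 1
      push_cast
      ring
    rw [hc]
    apply mul_le_mul_of_nonneg_left _ (by positivity)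
    exact Real.rpow_le_rpow_of_exponent_ge h0 h1 (by linarith)
  -- total bound
  have Htot : |∫ x in a..(a + h), e x * L x|
      ≤ ((k : ℝ) + 3) * (B * M * h ^ ((k : ℝ) + 2 + σ)) := by
    have := abs_sub_abs_le_abs_sub (∫ x in a..(a + h), e x * L x)
      (∫ x in a..(a + h), T x * L x)
    calc |∫ x in a..(a + h), e x * L x|
        ≤ |∫ x in a..(a + h), T x * L x|
          + |(∫ x in a..(a + h), e x * L x) - ∫ x in a..(a + h), T x * L x| := by
          have := abs_add_le (∫ x in a..(a + h), T x * L x)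
            ((∫ x in a..(a + h), e x * L x) - ∫ x in a..(a + h), T x * L x)
          simpa using this
      _ ≤ ((k : ℝ) + 2) * (B * M * h ^ ((k : ℝ) + 2 + σ)) + B * M * h ^ ((k : ℝ) + 2 + σ) :=
          add_le_add hGbound hRbound
      _ = ((k : ℝ) + 3) * (B * M * h ^ ((k : ℝ) + 2 + σ)) := by ring
  -- final assembly
  have hsplit : h ^ ((k : ℝ) + 2 + σ) = h * h ^ ((k : ℝ) + 1 + σ) := by
    rw [show (k : ℝ) + 2 + σ = 1 + ((k : ℝ) + 1 + σ) by ring, Real.rpow_add h0,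
      Real.rpow_one]
  have hIeq : (∫ y in a..(a + h), e y * (legendre j).eval (2 * (y - a) / h - 1))
      = ∫ x in a..(a + h), e x * L x := rfl
  rw [hIeq, abs_mul, abs_of_pos (show (0:ℝ) < (2 * (j : ℝ) + 1) / h by positivity)]
  calc (2 * (j : ℝ) + 1) / h * |∫ x in a..(a + h), e x * L x|
      ≤ (2 * (j : ℝ) + 1) / h * (((k : ℝ) + 3) * (B * M * h ^ ((k : ℝ) + 2 + σ))) :=
        mul_le_mul_of_nonneg_left Htot (by positivity)
    _ = (2 * (j : ℝ) + 1) * (((k : ℝ) + 3) * B * M * h ^ ((k : ℝ) + 1 + σ)) := by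
        rw [hsplit]
        field_simp
    _ ≤ (2 * (k : ℝ) + 1) * (((k : ℝ) + 3) * B * M * h ^ ((k : ℝ) + 1 + σ)) := by
        apply mul_le_mul_of_nonneg_right
        · have : (j : ℝ) ≤ (k : ℝ) := by exact_mod_cast hjk
          linarith
        · positivity
    _ = (2 * (k : ℝ) + 1) * ((k : ℝ) + 3) * B * M * h ^ ((k : ℝ) + 1 + σ) := by ring
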